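/- arXiv:0804.2763 — 6 statements merged into one kernel-verified Lean document; each statement's English description precedes it below -/
import Mathlib

section
/- Let p be an odd prime, V a finite-dimensional F_p-vector space, and α, β, γ, δ nilpotent endomorphisms of V satisfying δ = −(1/2)(δα + αδ). Then δ = 0. -/
open Module

theorem stmt4 {p : ℕ} [Fact p.Prime] (hp : Odd p) {V : Type} [AddCommGroup V]
    [Module (ZMod p) V] [FiniteDimensional (ZMod p) V]
    (α β γ δ : Module.End (ZMod p) V)
    (hα : IsNilpotent α) (hβ : IsNilpotent β) (hγ : IsNilpotent γ) (hδ : IsNilpotent δ)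
    (hrel : δ = -(2⁻¹ : ZMod p) • (δ * α + α * δ)) :
    δ = 0 := by
  set f : Module.End (ZMod p) (Module.End (ZMod p) V) :=
    (-(2⁻¹ : ZMod p)) • (LinearMap.mulRight (ZMod p) α + LinearMap.mulLeft (ZMod p) α) with hf
  have hfix : f δ = δ := by
    rw [hf]
    simp only [LinearMap.smul_apply, LinearMap.add_apply, LinearMap.mulRight_apply,
      LinearMap.mulLeft_apply]
    exact hrel.symm
  have hnil : IsNilpotent f := by
    apply IsNilpotent.smul
    exact Commute.isNilpotent_add
      ((LinearMap.commute_mulLeft_right α α).symm)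
      ((LinearMap.isNilpotent_mulRight_iff (ZMod p) α).mpr hα)
      ((LinearMap.isNilpotent_mulLeft_iff (ZMod p) α).mpr hα)
  have key : ∀ n, (f ^ n) δ = δ := by
    intro n
    induction n with
    | zero => simp
    | succ k ih => rw [pow_succ, Module.End.mul_apply, hfix, ih]
  obtain ⟨n, hn⟩ := hnil
  have := key n
  rw [hn] at this
  simpa using this.symm
end

section
/- Let p be an odd prime, G a finite p-group, and V a faithful finite-dimensional F_p[G]-module. Suppose A, B ∈ G are such that C := [A,B] = ABA^{-1}B^{-1} is a nontrivial element commuting with both A and B. If C is not quadratic on V, then neither A nor B is quadratic on V. -/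
open Module

/-- An element `g ≠ 1` is quadratic on `V` if `(g - 1)^2 V = 0`. -/
def IsQuadraticElement {p : ℕ} {G V : Type} [Group G] [AddCommGroup V] [Module (ZMod p) V]
    (ρ : Representation (ZMod p) G V) (g : G) : Prop :=
  g ≠ 1 ∧ (ρ g - 1) ^ 2 = 0

/-- Key ring-theoretic lemma: if `a^2 = 0`, `β` invertible, `γ * β = (1+a) * β * (1-a)`,
and `γ` commutes with `β`, and `2` is regular, then `(γ-1)^2 = 0`. -/
lemma key_ring {R : Type*} [Ring R] (a β βi γ : R)
    (haa : a * a = 0) (hββi : β * βi = 1) (hβiβ : βi * β = 1)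
    (hdef : γ * β = (1 + a) * β * (1 - a))
    (hcomm : γ * β = β * γ)
    (h2 : ∀ x : R, 2 * x = 0 → x = 0) :
    (γ - 1) ^ 2 = 0 := by
  set X : R := a * β - β * a - a * β * a with hX
  have hdef' : γ * β = β + X := by
    rw [hdef, hX]; noncomm_ring
  have hD0 : X * β = β * X := by
    have h1 : (β + X) * β = β * (β + X) := by
      calc (β + X) * β = γ * β * β := by rw [hdef']
        _ = β * γ * β := by rw [hcomm]
        _ = β * (γ * β) := by rw [mul_assoc]
        _ = β * (β + X) := by rw [hdef']
    rw [add_mul, mul_add] at h1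
    exact add_left_cancel h1
  have hXX : X * X = 0 := by
    apply h2
    have big : 2 * (X * X) + (a * (X * β - β * X) + (X * β - β * X) * a) =
        (a * a) * (β * β) + (β * β) * (a * a) - (a * a) * (β * a * β) + (β * a * β) * (a * a)
        - 2 * (β * (a * a) * β) + 2 * (β * (a * a) * (β * a))
        - 2 * ((a * β) * (a * a) * β) + 2 * ((a * β) * (a * a) * (β * a)) := by
      rw [hX]; noncomm_ring
    rw [hD0, sub_self, mul_zero, zero_mul, add_zero, add_zero, haa] at big
    simpa using big
  have hcβ : (γ - 1) * β = X := by
    rw [sub_mul, one_mul, hdef']; exact add_sub_cancel_left β X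
  have hcommc : (γ - 1) * β = β * (γ - 1) := by
    rw [sub_mul, mul_sub, hcomm, one_mul, mul_one]
  have h4 : (γ - 1) * (γ - 1) * (β * β) = 0 := by
    have e : (γ - 1) * (γ - 1) * (β * β) = ((γ - 1) * β) * ((γ - 1) * β) := by
      calc (γ - 1) * (γ - 1) * (β * β) = (γ - 1) * ((γ - 1) * β) * β := by noncomm_ring
        _ = (γ - 1) * (β * (γ - 1)) * β := by rw [hcommc]
        _ = ((γ - 1) * β) * ((γ - 1) * β) := by noncomm_ring
    rw [e, hcβ, hXX]
  have hββ1 : (β * β) * (βi * βi) = 1 := by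
    calc (β * β) * (βi * βi) = β * (β * βi) * βi := by noncomm_ring
      _ = 1 := by rw [hββi, mul_one, hββi]
  have h5 : (γ - 1) * (γ - 1) = 0 := by
    calc (γ - 1) * (γ - 1) = (γ - 1) * (γ - 1) * ((β * β) * (βi * βi)) := by
          rw [hββ1, mul_one]
      _ = ((γ - 1) * (γ - 1) * (β * β)) * (βi * βi) := by noncomm_ring
      _ = 0 := by rw [h4, zero_mul]
  rw [sq]; exact h5

/-- If `γ δ = δ γ = 1` and `(δ-1)^2 = 0` then `(γ-1)^2 = 0`. -/
lemma inv_quad {R : Type*} [Ring R] (γ δ : R) (h1 : γ * δ = 1) (h2 : δ * γ = 1)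
    (h : (δ - 1) ^ 2 = 0) : (γ - 1) ^ 2 = 0 := by
  have e2 : γ * (δ - 1) = -(γ - 1) := by rw [mul_sub, h1]; noncomm_ring
  have e1 : (δ - 1) * γ = -(γ - 1) := by rw [sub_mul, h2]; noncomm_ring
  have : (γ - 1) ^ 2 = γ * ((δ - 1) * (δ - 1)) * γ := by
    calc (γ - 1) ^ 2 = (-(γ - 1)) * (-(γ - 1)) := by noncomm_ring
      _ = (γ * (δ - 1)) * ((δ - 1) * γ) := by rw [e2, e1]
      _ = γ * ((δ - 1) * (δ - 1)) * γ := by noncomm_ring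
  rw [this, ← sq, h, mul_zero, zero_mul]

/-- Representation-level: if `A` acts quadratically and `C = [A,B]` commutes with `B`,
then `(ρ C - 1)^2 = 0`. -/
lemma main_aux {p : ℕ} [Fact p.Prime] (hp : Odd p) {G V : Type} [Group G]
    [AddCommGroup V] [Module (ZMod p) V]
    (ρ : Representation (ZMod p) G V) (A B C : G) (hC : C = A * B * A⁻¹ * B⁻¹)
    (hCB : C * B = B * C)
    (hA2 : (ρ A - 1) ^ 2 = 0) : (ρ C - 1) ^ 2 = 0 := by
  set a : Module.End (ZMod p) V := ρ A - 1 with ha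
  have haa : a * a = 0 := by rw [← sq]; exact hA2
  have h2 : ∀ x : Module.End (ZMod p) V, 2 * x = 0 → x = 0 := by
    intro x hx
    have h2ne : (2 : ZMod p) ≠ 0 := by
      intro h
      have : (p : ℕ) ∣ 2 := by
        have := (ZMod.natCast_eq_zero_iff 2 p).mp (by push_cast; exact h)
        exact this
      have hp2 : p = 2 := ((Nat.prime_dvd_prime_iff_eq (Fact.out) Nat.prime_two).mp this)
      rw [hp2] at hp
      simp [Nat.odd_iff] at hp
    have hsx : (2 : ZMod p) • x = 0 := by
      rw [two_smul]
      rw [two_mul] at hx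
      exact hx
    exact (smul_eq_zero.mp hsx).resolve_left h2ne
  -- ρ A⁻¹ = 1 - a
  have hα : ρ A = 1 + a := by rw [ha]; noncomm_ring
  have hαinv : ρ A⁻¹ = 1 - a := by
    have hmul : ρ A * (1 - a) = 1 := by
      have : (1 + a) * (1 - a) = 1 - a * a := by noncomm_ring
      rw [hα, this, haa, sub_zero]
    calc ρ A⁻¹ = ρ A⁻¹ * (ρ A * (1 - a)) := by rw [hmul, mul_one]
      _ = (ρ A⁻¹ * ρ A) * (1 - a) := by rw [mul_assoc]
      _ = 1 - a := by rw [← map_mul, inv_mul_cancel, map_one, one_mul]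
  have hdef : ρ C * ρ B = (1 + a) * ρ B * (1 - a) := by
    have hCBA : C * B = A * B * A⁻¹ := by rw [hC]; group
    calc ρ C * ρ B = ρ (C * B) := (map_mul ρ C B).symm
      _ = ρ (A * B * A⁻¹) := by rw [hCBA]
      _ = ρ A * ρ B * ρ A⁻¹ := by rw [map_mul, map_mul]
      _ = (1 + a) * ρ B * (1 - a) := by rw [hα, hαinv]
  have hcomm : ρ C * ρ B = ρ B * ρ C := by
    rw [← map_mul, ← map_mul, hCB]
  have hββi : ρ B * ρ B⁻¹ = 1 := by rw [← map_mul, mul_inv_cancel, map_one]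
  have hβiβ : ρ B⁻¹ * ρ B = 1 := by rw [← map_mul, inv_mul_cancel, map_one]
  exact key_ring a (ρ B) (ρ B⁻¹) (ρ C) haa hββi hβiβ hdef hcomm h2

theorem stmt5 {p : ℕ} [Fact p.Prime] (hp : Odd p) {G V : Type} [Group G] [Finite G]
    (hG : IsPGroup p G)
    [AddCommGroup V] [Module (ZMod p) V] [FiniteDimensional (ZMod p) V]
    (ρ : Representation (ZMod p) G V) (hfaith : Function.Injective ρ)
    (A B : G) (C : G) (hC : C = A * B * A⁻¹ * B⁻¹) (hC1 : C ≠ 1)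
    (hCA : C * A = A * C) (hCB : C * B = B * C)
    (hCnq : ¬ IsQuadraticElement ρ C) :
    ¬ IsQuadraticElement ρ A ∧ ¬ IsQuadraticElement ρ B := by
  constructor
  · rintro ⟨hA1, hA2⟩
    exact hCnq ⟨hC1, main_aux hp ρ A B C hC hCB hA2⟩
  · rintro ⟨hB1, hB2⟩
    have hCinv : C⁻¹ = B * A * B⁻¹ * A⁻¹ := by rw [hC]; group
    have hCinvA : C⁻¹ * A = A * C⁻¹ := by
      have hc : Commute C A := hCA
      exact hc.inv_left.eq
    have hq : (ρ C⁻¹ - 1) ^ 2 = 0 := main_aux hp ρ B A C⁻¹ hCinv hCinvA hB2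
    have hγδ : ρ C * ρ C⁻¹ = 1 := by rw [← map_mul, mul_inv_cancel, map_one]
    have hδγ : ρ C⁻¹ * ρ C = 1 := by rw [← map_mul, inv_mul_cancel, map_one]
    exact hCnq ⟨hC1, inv_quad (ρ C) (ρ C⁻¹) hγδ hδγ hq⟩
end

section
/- Let p be an odd prime, G a finite p-group of nilpotence class at most two, and V a faithful finite-dimensional F_p[G]-module. If G contains a quadratic element, then Ω_1(Z(G)) contains a quadratic element. -/
open Module

private lemma one_add_pow_of_sq {R : Type*} [Ring R] (N : R) (h : N * N = 0) (n : ℕ) :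
    (1 + N) ^ n = 1 + n • N := by
  induction n with
  | zero => simp
  | succ k ih =>
      have hk : (k • N) * N = 0 := by rw [smul_mul_assoc, h, smul_zero]
      rw [pow_succ, ih, succ_nsmul, add_mul, mul_add, mul_add, mul_one, one_mul, mul_one, hk]
      abel

private lemma key_mn_zero {R : Type*} [Ring R] (p4 : ∀ r : R, (4:ℕ) • r = 0 → r = 0)
    (N M M₂ : R) (hN : N * N = 0) (hM : M * M = 0) (hM2 : M₂ * M₂ = 0)
    (hc : (1 + M) * (1 - N) * (1 + N) = (1 + N) * ((1 + M) * (1 - N)))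
    (h2 : ((1 + M) * (1 - N)) * ((1 + M) * (1 - N)) = (1 + M₂) * (1 - N)) :
    M * N = 0 ∧ N * M = 0 := by
  have hN' : ∀ a : R, N * (N * a) = 0 := fun a => by rw [← mul_assoc, hN, zero_mul]
  have hM' : ∀ a : R, M * (M * a) = 0 := fun a => by rw [← mul_assoc, hM, zero_mul]
  -- step 1 : N*(M*N) = 0
  have e1 : (1 + M) * (1 - N) * (1 + N) * N = (1 + N) * ((1 + M) * (1 - N)) * N := by
    rw [hc]
  simp only [add_mul, mul_add, sub_mul, mul_sub, one_mul, mul_one, mul_assoc, hN, hN', hM, hM',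
    mul_zero, zero_mul, add_zero, zero_add, sub_zero, zero_sub] at e1
  have hNMN : N * (M * N) = 0 := left_eq_add.mp (add_left_cancel e1)
  -- step 2 : N*M = M*N
  have e2 := hc
  simp only [add_mul, mul_add, sub_mul, mul_sub, one_mul, mul_one, mul_assoc, hN, hN', hM, hM',
    hNMN, mul_zero, zero_mul, add_zero, zero_add, sub_zero, zero_sub] at e2
  have h3 : N * M - M * N =
      (1 + N + (M + N * M) - (N + M * N)) - (1 + M - (N + M * N) + (N + M * N)) := by abel
  rw [← e2, sub_self] at h3
  have hcomm : N * M = M * N := sub_eq_zero.mp h3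
  have hcomm' : ∀ a : R, N * (M * a) = M * (N * a) := fun a => by
    rw [← mul_assoc, hcomm, mul_assoc]
  -- step 3 : M₂ = 2M - N - 2MN
  have hinv : (1 - N) * (1 + N) = 1 := by
    have h4 : (1 - N) * (1 + N) = 1 - N * N := by noncomm_ring
    rw [hN, sub_zero] at h4; exact h4
  have e3 : ((1 + M) * (1 - N)) * ((1 + M) * (1 - N)) * (1 + N) = 1 + M₂ := by
    rw [h2, mul_assoc, hinv, mul_one]
  have hM₂val : M₂ = M + M - N - (M * N + M * N) := by
    have e4 : M₂ = ((1 + M) * (1 - N)) * ((1 + M) * (1 - N)) * (1 + N) - 1 := by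
      rw [e3]; abel
    rw [e4]
    simp only [add_mul, mul_add, sub_mul, mul_sub, one_mul, mul_one, mul_assoc, hN, hN', hM, hM',
      hNMN, hcomm, hcomm', mul_zero, zero_mul, add_zero, zero_add, sub_zero, zero_sub]
    abel
  -- step 4 : 4 • (M*N) = 0
  have e5 := hM2
  rw [hM₂val] at e5
  simp only [add_mul, mul_add, sub_mul, mul_sub, one_mul, mul_one, mul_assoc, hN, hN', hM, hM',
    hNMN, hcomm, hcomm', mul_zero, zero_mul, add_zero, zero_add, sub_zero, zero_sub] at e5
  have e6 : (4:ℕ) • (M * N) = -(-(M * N) + -(M * N) - (M * N + M * N)) := by abel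
  rw [e5, neg_zero] at e6
  have hMN0 : M * N = 0 := p4 _ e6
  exact ⟨hMN0, by rw [hcomm, hMN0]⟩

theorem stmt6 {p : ℕ} [Fact p.Prime] (hp : Odd p) {G V : Type} [Group G] [Finite G]
    (hG : IsPGroup p G)
    (hclass2 : ∀ a b : G, a * b * a⁻¹ * b⁻¹ ∈ Subgroup.center G)
    [AddCommGroup V] [Module (ZMod p) V] [FiniteDimensional (ZMod p) V]
    (ρ : Representation (ZMod p) G V) (hfaith : Function.Injective ρ)
    (hquad : ∃ g : G, IsQuadraticElement ρ g) :
    ∃ z ∈ Subgroup.center G, z ^ p = 1 ∧ IsQuadraticElement ρ z := by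
  obtain ⟨g, hg1, hgq⟩ := hquad
  set N : Module.End (ZMod p) V := ρ g - 1 with hNdef
  have hN : N * N = 0 := by rw [← pow_two]; exact hgq
  -- any element with quadratic action has order dividing p
  have ordp : ∀ h : G, (ρ h - 1) * (ρ h - 1) = 0 → h ^ p = 1 := by
    intro h hh
    apply hfaith
    rw [map_pow, map_one]
    have e : ρ h = 1 + (ρ h - 1) := by abel
    rw [e, one_add_pow_of_sq _ hh p]
    have hz : (p : ℕ) • (ρ h - 1) = 0 := by
      rw [← Nat.cast_smul_eq_nsmul (ZMod p), ZMod.natCast_self, zero_smul]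
    rw [hz, add_zero]
  by_cases hgc : g ∈ Subgroup.center G
  · exact ⟨g, hgc, ordp g hN, hg1, hgq⟩
  · -- choose x not commuting with g
    have hex : ∃ x : G, x * g ≠ g * x := by
      by_contra hall
      push_neg at hall
      exact hgc (Subgroup.mem_center_iff.mpr hall)
    obtain ⟨x, hx⟩ := hex
    set z : G := x * g * x⁻¹ * g⁻¹ with hzdef
    have hzc : z ∈ Subgroup.center G := hclass2 x g
    have hz1 : z ≠ 1 := by
      intro h
      apply hx
      have e : x * g = (x * g * x⁻¹ * g⁻¹) * (g * x) := by group
      rw [← hzdef, h, one_mul] at e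
      exact e
    -- conjugates of g act quadratically
    have conjsq : ∀ w : G, (ρ (w * g * w⁻¹) - 1) * (ρ (w * g * w⁻¹) - 1) = 0 := by
      intro w
      have hw : ρ w * ρ w⁻¹ = 1 := by rw [← map_mul]; simp
      have hw' : ρ w⁻¹ * ρ w = 1 := by rw [← map_mul]; simp
      have h1 : ρ (w * g * w⁻¹) - 1 = ρ w * ((ρ g - 1) * ρ w⁻¹) := by
        calc ρ (w * g * w⁻¹) - 1 = ρ w * ρ g * ρ w⁻¹ - ρ w * ρ w⁻¹ := by
              rw [map_mul, map_mul, hw]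
          _ = ρ w * ((ρ g - 1) * ρ w⁻¹) := by noncomm_ring
      rw [h1]
      calc ρ w * ((ρ g - 1) * ρ w⁻¹) * (ρ w * ((ρ g - 1) * ρ w⁻¹))
          = ρ w * ((ρ g - 1) * ((ρ w⁻¹ * ρ w) * ((ρ g - 1) * ρ w⁻¹))) := by
            simp only [mul_assoc]
        _ = ρ w * (((ρ g - 1) * (ρ g - 1)) * ρ w⁻¹) := by rw [hw', one_mul]; simp only [mul_assoc]
        _ = 0 := by rw [← hNdef, hN, zero_mul, mul_zero]
    set M : Module.End (ZMod p) V := ρ (x * g * x⁻¹) - 1 with hMdef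
    set M₂ : Module.End (ZMod p) V := ρ ((x * x) * g * (x * x)⁻¹) - 1 with hM2def
    have hMsq : M * M = 0 := conjsq x
    have hM2sq : M₂ * M₂ = 0 := conjsq (x * x)
    have hA : ρ g = 1 + N := by rw [hNdef]; abel
    have hM1 : ρ (x * g * x⁻¹) = 1 + M := by rw [hMdef]; abel
    have hM21 : ρ ((x * x) * g * (x * x)⁻¹) = 1 + M₂ := by rw [hM2def]; abel
    have hginv : ρ g⁻¹ = 1 - N := by
      have hgN : ρ g * (1 - N) = 1 := by
        have e : (1 + N) * (1 - N) = 1 - N * N := by noncomm_ring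
        rw [hA, e, hN, sub_zero]
      calc ρ g⁻¹ = ρ g⁻¹ * (ρ g * (1 - N)) := by rw [hgN, mul_one]
        _ = (ρ g⁻¹ * ρ g) * (1 - N) := by rw [mul_assoc]
        _ = 1 - N := by rw [← map_mul]; simp
    have hzρ : ρ z = (1 + M) * (1 - N) := by
      rw [hzdef, map_mul, hM1, hginv]
    -- commutation of z with g
    have hzg : z * g = g * z := (Subgroup.mem_center_iff.mp hzc g).symm
    have hc : (1 + M) * (1 - N) * (1 + N) = (1 + N) * ((1 + M) * (1 - N)) := by
      have e : ρ z * ρ g = ρ g * ρ z := by rw [← map_mul, ← map_mul, hzg]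
      rw [hzρ, hA] at e
      exact e
    -- z^2 = [x^2, g]
    have hzx : x * z = z * x := Subgroup.mem_center_iff.mp hzc x
    have hxg : x * g * x⁻¹ = z * g := by rw [hzdef]; group
    have hzz : (x * x) * g * (x * x)⁻¹ * g⁻¹ = z * z := by
      calc (x * x) * g * (x * x)⁻¹ * g⁻¹ = x * (x * g * x⁻¹) * x⁻¹ * g⁻¹ := by group
        _ = x * (z * g) * x⁻¹ * g⁻¹ := by rw [hxg]
        _ = (x * z) * (g * x⁻¹ * g⁻¹) := by group
        _ = (z * x) * (g * x⁻¹ * g⁻¹) := by rw [hzx]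
        _ = z * (x * g * x⁻¹ * g⁻¹) := by group
        _ = z * z := by rw [← hzdef]
    have h2 : ((1 + M) * (1 - N)) * ((1 + M) * (1 - N)) = (1 + M₂) * (1 - N) := by
      have e : ρ z * ρ z = ρ ((x * x) * g * (x * x)⁻¹) * ρ g⁻¹ := by
        rw [← map_mul, ← map_mul, ← hzz]
      rw [hzρ, hM21, hginv] at e
      exact e
    -- 4-torsion-free
    have p4 : ∀ r : Module.End (ZMod p) V, (4:ℕ) • r = 0 → r = 0 := by
      intro r hr
      have h4 : ((4:ℕ) : ZMod p) ≠ 0 := by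
        rw [Ne, ZMod.natCast_eq_zero_iff]
        intro hdvd
        have hpp : p.Prime := Fact.out
        have h22 : p ∣ 2 * 2 := by simpa using hdvd
        have hp2 : p = 2 := by
          rcases hpp.dvd_mul.mp h22 with h | h <;>
            exact (Nat.prime_dvd_prime_iff_eq hpp Nat.prime_two).mp h
        rw [hp2] at hp
        exact (by norm_num : ¬ Odd 2) hp
      have hr' : ((4:ℕ) : ZMod p) • r = 0 := by
        rw [Nat.cast_smul_eq_nsmul]; exact hr
      rcases smul_eq_zero.mp hr' with h | h
      · exact absurd h h4
      · exact h
    obtain ⟨hMN, hNM⟩ := key_mn_zero p4 N M M₂ hN hMsq hM2sq hc h2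
    -- z is quadratic
    have hzr : ρ z - 1 = M - N := by
      have e : (1 + M) * (1 - N) - 1 = M - N - M * N := by noncomm_ring
      rw [hzρ, e, hMN, sub_zero]
    have hzquad : (ρ z - 1) * (ρ z - 1) = 0 := by
      rw [hzr]
      have e : (M - N) * (M - N) = M * M - M * N - N * M + N * N := by noncomm_ring
      rw [e, hN, hMsq, hMN, hNM]
      abel
    exact ⟨z, hzc, ordp z hzquad, hz1, by rw [pow_two]; exact hzquad⟩
end

section
/- Let p be a prime, G ≠ 1 a finite elementary abelian p-group, and V a finite-dimensional faithful F_p[G]-module such that no nonidentity element g of G satisfies (g−1)^2 V = 0. Let H ≤ G with H ≠ 1, and let W be a subspace of the fixed space V^H. Then there exist a proper subgroup K < H and a subspace U with W ⊊ U ⊊ V, U ⊆ V^K, and |H|·|W| = |K|·|U|. -/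
open Module

/-- The fixed-point subspace `V^H` of a subgroup `H` acting on `V` via `ρ`. -/
def fixedSubmodule {p : ℕ} {G V : Type} [Group G] [AddCommGroup V] [Module (ZMod p) V]
    (ρ : Representation (ZMod p) G V) (H : Subgroup G) : Submodule (ZMod p) V where
  carrier := {v | ∀ g ∈ H, ρ g v = v}
  add_mem' := fun ha hb g hg => by simp [map_add, ha g hg, hb g hg]
  zero_mem' := fun g hg => by simp
  smul_mem' := fun c v hv g hg => by simp [map_smul, hv g hg]

set_option maxHeartbeats 2000000 in
theorem stmt7 {p : ℕ} [Fact p.Prime] {G V : Type} [Group G] [Finite G] [Nontrivial G]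
    (hab : ∀ a b : G, a * b = b * a) (hel : ∀ g : G, g ^ p = 1)
    [AddCommGroup V] [Module (ZMod p) V] [FiniteDimensional (ZMod p) V]
    (ρ : Representation (ZMod p) G V) (hfaith : Function.Injective ρ)
    (hnq : ∀ g : G, g ≠ 1 → (ρ g - 1) ^ 2 ≠ 0)
    (H : Subgroup G) (hH : H ≠ ⊥)
    (W : Submodule (ZMod p) V) (hW : W ≤ fixedSubmodule ρ H) :
    ∃ K : Subgroup G, K < H ∧ ∃ U : Submodule (ZMod p) V,
      W < U ∧ U < ⊤ ∧ U ≤ fixedSubmodule ρ K ∧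
      Nat.card H * Nat.card W = Nat.card K * Nat.card U := by
  have hp2 : 2 ≤ p := (Fact.out : p.Prime).two_le
  haveI : Finite V := Module.finite_of_finite (ZMod p)
  -- a nontrivial element of H
  obtain ⟨h0, h0H, h0ne⟩ : ∃ h, h ∈ H ∧ h ≠ 1 := by
    rcases Subgroup.bot_or_exists_ne_one H with hb | ⟨h, hh, hne⟩
    · exact absurd hb hH
    · exact ⟨h, hh, hne⟩
  -- W is fixed pointwise by H
  have hWfix : ∀ w ∈ W, ∀ g ∈ H, ρ g w = w := fun w hw g hg => hW hw g hg
  -- commuting property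
  have hcomm : ∀ a b : G, ∀ v : V, ρ a (ρ b v) = ρ b (ρ a v) := by
    intro a b v
    rw [← Module.End.mul_apply, ← map_mul, hab a b, map_mul, Module.End.mul_apply]
  -- The submodule I
  set I : Submodule (ZMod p) V :=
    { carrier := {v | ∀ g ∈ H, ρ g v - v ∈ W}
      add_mem' := by
        intro a b ha hb g hg
        have : ρ g (a + b) - (a + b) = (ρ g a - a) + (ρ g b - b) := by
          rw [map_add]; abel
        rw [this]; exact W.add_mem (ha g hg) (hb g hg)
      zero_mem' := by intro g hg; simp
      smul_mem' := by
        intro c v hv g hg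
        have : ρ g (c • v) - c • v = c • (ρ g v - v) := by
          rw [map_smul, smul_sub]
        rw [this]; exact W.smul_mem c (hv g hg) } with hIdef
  have hmemI : ∀ v : V, v ∈ I ↔ ∀ g ∈ H, ρ g v - v ∈ W := fun v => Iff.rfl
  have hWI : W ≤ I := by
    intro w hw g hg
    rw [hWfix w hw g hg]; simpa using W.zero_mem
  have hInotTop : I ≠ ⊤ := by
    intro htop
    apply hnq h0 h0ne
    ext v
    have h1 : ρ h0 v - v ∈ W := by
      have : v ∈ I := htop ▸ Submodule.mem_top
      exact this h0 h0H
    have h2 : ρ h0 (ρ h0 v - v) = ρ h0 v - v := hWfix _ h1 h0 h0H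
    simp only [pow_two, Module.End.mul_apply, LinearMap.sub_apply, Module.End.one_apply,
      LinearMap.zero_apply]
    rw [h2, sub_self]
  -- I is H-invariant
  have hInv : ∀ g ∈ H, ∀ v ∈ I, ρ g v ∈ I := by
    intro g hg v hv g' hg'
    have h1 : ρ g' (ρ g v) = ρ g (ρ g' v) := hcomm g' g v
    have h2 : ρ g (ρ g' v - v) - (ρ g' v - v) ∈ W := by
      have hx : ρ g' v - v ∈ W := hv g' hg'
      rw [hWfix _ hx g hg]; simpa using W.zero_mem
    have h3 : ρ g' (ρ g v) - ρ g v = (ρ g (ρ g' v - v) - (ρ g' v - v)) + (ρ g' v - v) := by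
      rw [h1, map_sub]; abel
    rw [h3]
    exact W.add_mem h2 (hv g' hg')
  -- the quotient V ⧸ I with its H-action
  have hmapQ : ∀ h : H, I ≤ I.comap (ρ (h : G)) := fun h v hv => hInv h h.2 v hv
  letI : MulAction H (V ⧸ I) :=
    { smul := fun h x => Submodule.mapQ I I (ρ (h : G)) (hmapQ h) x
      one_smul := by
        intro x
        obtain ⟨v, rfl⟩ := Submodule.Quotient.mk_surjective I x
        show Submodule.mapQ I I (ρ ((1 : H) : G)) _ _ = _
        rw [Submodule.mapQ_apply]
        simp
      mul_smul := by
        intro a b x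
        obtain ⟨v, rfl⟩ := Submodule.Quotient.mk_surjective I x
        show Submodule.mapQ I I (ρ ((a * b : H) : G)) _ _ =
          Submodule.mapQ I I (ρ (a : G)) _ (Submodule.mapQ I I (ρ (b : G)) _ _)
        rw [Submodule.mapQ_apply, Submodule.mapQ_apply, Submodule.mapQ_apply]
        simp [Module.End.mul_apply] }
  have hsmul_mk : ∀ (h : H) (v : V),
      h • (Submodule.Quotient.mk v : V ⧸ I) = Submodule.Quotient.mk (ρ (h : G) v) := by
    intro h v
    show Submodule.mapQ I I (ρ (h : G)) _ _ = _
    rw [Submodule.mapQ_apply]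
  -- H is a p-group
  have hpH : IsPGroup p H := by
    intro h
    refine ⟨1, ?_⟩
    ext
    rw [pow_one]
    push_cast
    exact hel (h : G)
  -- find a nonzero fixed point in V ⧸ I
  obtain ⟨v0, hv0I, hv0J⟩ : ∃ v0 : V, v0 ∉ I ∧ ∀ g ∈ H, ρ g v0 - v0 ∈ I := by
    haveI : Nontrivial (V ⧸ I) :=
      Submodule.Quotient.nontrivial_iff.mpr hInotTop
    haveI : Finite (V ⧸ I) := Finite.of_surjective _ (Submodule.Quotient.mk_surjective I)
    have hmod := hpH.card_modEq_card_fixedPoints (V ⧸ I)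
    have hdvd : p ∣ Nat.card (V ⧸ I) := by
      haveI : Fintype (V ⧸ I) := Fintype.ofFinite _
      have hfr : 0 < Module.finrank (ZMod p) (V ⧸ I) := Module.finrank_pos
      rw [Nat.card_eq_fintype_card, card_eq_pow_finrank (K := ZMod p) (V := V ⧸ I), ZMod.card]
      exact dvd_pow_self p hfr.ne'
    have hdvd2 : p ∣ Nat.card (MulAction.fixedPoints H (V ⧸ I)) :=
      (Nat.modEq_zero_iff_dvd.mp ((hmod.symm.trans (Nat.modEq_zero_iff_dvd.mpr hdvd))))
    have h0fix : (0 : V ⧸ I) ∈ MulAction.fixedPoints H (V ⧸ I) := by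
      intro h
      have := hsmul_mk h 0
      simpa using this
    by_contra hcon
    push_neg at hcon
    have hsub : MulAction.fixedPoints H (V ⧸ I) = {0} := by
      apply Set.eq_singleton_iff_unique_mem.mpr
      refine ⟨h0fix, ?_⟩
      intro x hx
      obtain ⟨v, rfl⟩ := Submodule.Quotient.mk_surjective I x
      by_contra hxne
      have hvI : v ∉ I := by
        intro hvI
        exact hxne ((Submodule.Quotient.mk_eq_zero I).mpr hvI)
      obtain ⟨g, hg, hgn⟩ := hcon v hvI
      apply hgn
      have := hx ⟨g, hg⟩
      rw [hsmul_mk] at this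
      exact (Submodule.Quotient.eq I).mp this
    rw [hsub] at hdvd2
    simp [Nat.card_unique] at hdvd2
    omega
  -- an element of H not fixing v0 mod W
  obtain ⟨h1, h1H, h1W⟩ : ∃ h, h ∈ H ∧ ρ h v0 - v0 ∉ W := by
    by_contra hcon
    push_neg at hcon
    exact hv0I (fun g hg => hcon g hg)
  -- the subgroup K
  set K : Subgroup G :=
    { carrier := {g | g ∈ H ∧ ρ g v0 - v0 ∈ W}
      one_mem' := ⟨H.one_mem, by simp⟩
      mul_mem' := by
        rintro a b ⟨haH, haW⟩ ⟨hbH, hbW⟩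
        refine ⟨H.mul_mem haH hbH, ?_⟩
        have key : ρ (a * b) v0 - v0 = ρ a (ρ b v0 - v0) + (ρ a v0 - v0) := by
          rw [map_mul, Module.End.mul_apply, map_sub]; abel
        rw [key, hWfix _ hbW a haH]
        exact W.add_mem hbW haW
      inv_mem' := by
        rintro a ⟨haH, haW⟩
        refine ⟨H.inv_mem haH, ?_⟩
        have h1' : ρ a⁻¹ (ρ a v0 - v0) = ρ a v0 - v0 := hWfix _ haW a⁻¹ (H.inv_mem haH)
        have h2' : ρ a⁻¹ (ρ a v0) = v0 := by
          rw [← Module.End.mul_apply, ← map_mul, inv_mul_cancel, map_one, Module.End.one_apply]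
        rw [map_sub, h2'] at h1'
        have : ρ a⁻¹ v0 - v0 = -(ρ a v0 - v0) := by rw [← h1']; abel
        rw [this]
        exact W.neg_mem haW } with hKdef
  have hmemK : ∀ g : G, g ∈ K ↔ g ∈ H ∧ ρ g v0 - v0 ∈ W := fun g => Iff.rfl
  have hKH : K ≤ H := fun g hg => hg.1
  have hKlt : K < H := lt_of_le_of_ne hKH (fun heq => h1W (((heq ▸ h1H : h1 ∈ K)).2))
  -- the submodule U
  set S : Set V := (fun g => ρ g v0 - v0) '' (H : Set G) with hSdef
  set U : Submodule (ZMod p) V := W ⊔ Submodule.span (ZMod p) S with hUdef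
  have hSU : ∀ g ∈ H, ρ g v0 - v0 ∈ U := fun g hg =>
    le_sup_right (α := Submodule (ZMod p) V) (Submodule.subset_span ⟨g, hg, rfl⟩)
  have hWU : W ≤ U := le_sup_left
  have hWltU : W < U := lt_of_le_of_ne hWU (fun heq => h1W (heq ▸ hSU h1 h1H))
  have hUI : U ≤ I := by
    refine sup_le hWI (Submodule.span_le.mpr ?_)
    rintro s ⟨g, hg, rfl⟩
    exact hv0J g hg
  have hUtop : U < ⊤ := lt_of_le_of_lt hUI (lt_top_iff_ne_top.mpr hInotTop)
  have hUfix : U ≤ fixedSubmodule ρ K := by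
    refine sup_le ?_ (Submodule.span_le.mpr ?_)
    · intro w hw g hg
      exact hWfix w hw g (hKH hg)
    · rintro s ⟨h, hh, rfl⟩
      intro g hg
      obtain ⟨hgH, hgW⟩ := hg
      have e1 : ρ g (ρ h v0) = ρ h (ρ g v0) := hcomm g h v0
      have e2 : ρ h (ρ g v0 - v0) = ρ g v0 - v0 := hWfix _ hgW h hh
      rw [map_sub, e1]
      rw [map_sub] at e2
      have : ρ h (ρ g v0) = (ρ g v0 - v0) + ρ h v0 := by rw [← e2]; abel
      rw [this]
      have hgv0 : ρ g v0 = (ρ g v0 - v0) + v0 := by abel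
      nth_rewrite 2 [hgv0]
      abel
  -- the counting argument
  set q : V →ₗ[ZMod p] V ⧸ W := W.mkQ with hqdef
  set f : H → V ⧸ W := fun h => q (ρ (h : G) v0 - v0) with hfdef
  have hadd : ∀ a b : H, f (a * b) = f a + f b := by
    intro a b
    have key : (ρ ((a : G) * b) v0 - v0) - ((ρ (a : G) v0 - v0) + (ρ (b : G) v0 - v0))
        = ρ (a : G) (ρ (b : G) v0 - v0) - (ρ (b : G) v0 - v0) := by
      rw [map_mul, Module.End.mul_apply, map_sub]; abel
    have hker : (ρ ((a : G) * b) v0 - v0) - ((ρ (a : G) v0 - v0) + (ρ (b : G) v0 - v0)) ∈ W := by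
      rw [key]
      exact (hv0J (b : G) b.2) (a : G) a.2
    show q _ = q _ + q _
    rw [← map_add]
    exact (Submodule.Quotient.eq W).mpr hker
  have hone : f 1 = 0 := by
    simp [hfdef]
  have hpow : ∀ (n : ℕ) (a : H), f (a ^ n) = n • f a := by
    intro n
    induction n with
    | zero => intro a; simpa using hone
    | succ k ih => intro a; rw [pow_succ, hadd, ih, succ_nsmul]
  -- the range submodule R
  set R : Submodule (ZMod p) (V ⧸ W) :=
    { carrier := Set.range f
      add_mem' := by rintro a b ⟨x, rfl⟩ ⟨y, rfl⟩; exact ⟨x * y, hadd x y⟩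
      zero_mem' := ⟨1, hone⟩
      smul_mem' := by
        rintro c x ⟨a, rfl⟩
        refine ⟨a ^ c.val, ?_⟩
        rw [hpow, ← Nat.cast_smul_eq_nsmul (ZMod p), ZMod.natCast_rightInverse c] } with hRdef
  have hmemR : ∀ x : V ⧸ W, x ∈ R ↔ ∃ h : H, f h = x := fun x => Iff.rfl
  -- U.map q = R
  have hmapU : U.map q = R := by
    apply le_antisymm
    · rw [Submodule.map_le_iff_le_comap]
      refine sup_le ?_ (Submodule.span_le.mpr ?_)
      · intro w hw
        show q w ∈ R
        have : q w = 0 := (Submodule.Quotient.mk_eq_zero W).mpr hw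
        rw [this]; exact R.zero_mem
      · rintro s ⟨g, hg, rfl⟩
        exact ⟨⟨g, hg⟩, rfl⟩
    · rintro x ⟨h, rfl⟩
      exact ⟨ρ (h : G) v0 - v0, hSU (h : G) h.2, rfl⟩
  -- the group hom φ : H →* Multiplicative R
  set φ : H →* Multiplicative R :=
    { toFun := fun h => Multiplicative.ofAdd (⟨f h, ⟨h, rfl⟩⟩ : R)
      map_one' := by
        apply Multiplicative.toAdd.injective
        exact Subtype.ext hone
      map_mul' := by
        intro a b
        apply Multiplicative.toAdd.injective
        exact Subtype.ext (hadd a b) } with hφdef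
  have hφsurj : Function.Surjective φ := by
    intro x
    obtain ⟨h, hh⟩ := (Multiplicative.toAdd x).2
    exact ⟨h, Multiplicative.toAdd.injective (Subtype.ext hh)⟩
  have hφker : φ.ker = K.subgroupOf H := by
    ext h
    simp only [MonoidHom.mem_ker, Subgroup.mem_subgroupOf, hmemK]
    constructor
    · intro hk
      refine ⟨h.2, ?_⟩
      have h2 : (⟨f h, ⟨h, rfl⟩⟩ : R) = 0 := Multiplicative.ofAdd.injective hk
      exact (Submodule.Quotient.mk_eq_zero W).mp (Subtype.ext_iff.mp h2)
    · rintro ⟨-, hw⟩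
      apply Multiplicative.toAdd.injective
      apply Subtype.ext
      exact (Submodule.Quotient.mk_eq_zero W).mpr hw
  -- cardinalities
  have cardH : Nat.card H = Nat.card (H ⧸ K.subgroupOf H) * Nat.card (K.subgroupOf H) :=
    Subgroup.card_eq_card_quotient_mul_card_subgroup _
  have cardKsub : Nat.card (K.subgroupOf H) = Nat.card K :=
    Nat.card_congr (Subgroup.subgroupOfEquivOfLe hKH).toEquiv
  have cardQuot : Nat.card (H ⧸ K.subgroupOf H) = Nat.card R := by
    rw [← hφker]
    have e := QuotientGroup.quotientKerEquivOfSurjective φ hφsurj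
    exact Nat.card_congr (e.toEquiv.trans Multiplicative.toAdd)
  -- card U
  set W' : Submodule (ZMod p) U := W.comap U.subtype with hW'def
  have cardU : Nat.card U = Nat.card W' * Nat.card (U ⧸ W') :=
    Submodule.card_eq_card_quotient_mul_card W'
  have cardW' : Nat.card W' = Nat.card W :=
    Nat.card_congr (Submodule.comapSubtypeEquivOfLe hWU).toEquiv
  have cardUQuot : Nat.card (U ⧸ W') = Nat.card R := by
    set g : U →ₗ[ZMod p] V ⧸ W := q.comp U.subtype with hgdef
    have hkerg : LinearMap.ker g = W' := by
      rw [hgdef, LinearMap.ker_comp, Submodule.ker_mkQ]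
    have hrangeg : LinearMap.range g = R := by
      rw [hgdef, LinearMap.range_comp, Submodule.range_subtype, hmapU]
    have e1 := g.quotKerEquivRange
    rw [hkerg, hrangeg] at e1
    exact Nat.card_congr e1.toEquiv
  refine ⟨K, hKlt, U, hWltU, hUtop, hUfix, ?_⟩
  rw [cardH, cardKsub, cardQuot, cardU, cardW', cardUQuot]
  ring
end

section
/- Let p be a prime, G ≠ 1 a finite elementary abelian p-group, and V a finite-dimensional faithful F_p[G]-module with no quadratic elements in G. Then for every nontrivial subgroup H ≤ G and every subspace W ⊆ V^H, the strict inequality |H|·|W| < |V| holds. -/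
open Module


namespace Stmt8Aux

variable {p : ℕ} [Fact p.Prime] {G V : Type} [Group G]
  [AddCommGroup V] [Module (ZMod p) V]
  (ρ : Representation (ZMod p) G V)

lemma mem_fixed {H : Subgroup G} {v : V} :
    v ∈ fixedSubmodule ρ H ↔ ∀ g ∈ H, ρ g v = v := Iff.rfl

/-- `ℓ_g = ρ g - 1`. -/
def ell (g : G) : Module.End (ZMod p) V := ρ g - 1

lemma ell_apply (g : G) (x : V) : ell ρ g x = ρ g x - x := rfl

lemma ell_fixed {H : Subgroup G} {g : G} (hg : g ∈ H) {w : V}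
    (hw : w ∈ fixedSubmodule ρ H) : ell ρ g w = 0 := by
  rw [ell_apply, hw g hg, sub_self]

lemma rho_eq_add_ell (g : G) (x : V) : ρ g x = x + ell ρ g x := by
  rw [ell_apply]; abel

lemma commute_ell (hab : ∀ a b : G, a * b = b * a) (a b : G) :
    Commute (ell ρ a) (ell ρ b) := by
  have h : Commute (ρ a) (ρ b) := by
    unfold Commute SemiconjBy
    rw [← map_mul, ← map_mul, hab]
  exact (h.sub_right (Commute.one_right _)).sub_left (Commute.one_left _)

lemma ell_mul (a b : G) :
    ell ρ (a * b) = ell ρ a + ell ρ b + ell ρ a * ell ρ b := by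
  unfold ell
  rw [map_mul]
  noncomm_ring

lemma ell_one : ell ρ (1 : G) = 0 := by
  unfold ell; rw [map_one, sub_self]

lemma ell_pow_p (hel : ∀ g : G, g ^ p = 1) [Nontrivial V] (g : G) :
    ell ρ g ^ p = 0 := by
  haveI : CharP (Module.End (ZMod p) V) p :=
    charP_of_injective_algebraMap
      (algebraMap (ZMod p) (Module.End (ZMod p) V)).injective p
  unfold ell
  rw [sub_pow_char_of_commute p (Commute.one_right _), one_pow, ← map_pow, hel, map_one, sub_self]

/-- cardinality of a subgroup is a power of `p`. -/
lemma card_subgroup_pow [Finite G] (hel : ∀ g : G, g ^ p = 1) (C : Subgroup G) :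
    ∃ n, Nat.card C = p ^ n := by
  refine IsPGroup.iff_card.mp ?_
  intro g
  refine ⟨1, ?_⟩
  have : ((g ^ p ^ 1 : C) : G) = 1 := by
    rw [Subgroup.coe_pow, pow_one, hel]
  exact_mod_cast (OneMemClass.coe_eq_one).mp this

/-- cardinality of a submodule is a power of `p`. -/
lemma card_submodule_pow [Finite V] (M : Submodule (ZMod p) V) :
    ∃ n, Nat.card M = p ^ n := by
  have hP : IsPGroup p (Multiplicative M) := by
    intro g
    refine ⟨1, ?_⟩
    have : (p ^ 1) • g.toAdd = 0 := by
      rw [pow_one]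
      have : (p : ZMod p) • (g.toAdd : M) = p • g.toAdd := Nat.cast_smul_eq_nsmul _ _ _
      rw [← this, ZMod.natCast_self, zero_smul]
    calc g ^ p ^ 1 = Multiplicative.ofAdd ((p ^ 1) • g.toAdd) := rfl
    _ = 1 := by rw [this]; rfl
  have := IsPGroup.iff_card.mp hP
  rwa [Nat.card_congr (Multiplicative.toAdd : Multiplicative M ≃ M)] at this

lemma card_submodule_mono [Finite V] {P Q : Submodule (ZMod p) V} (h : P ≤ Q) :
    Nat.card P ≤ Nat.card Q :=
  Nat.card_le_card_of_injective (Submodule.inclusion h) (Submodule.inclusion_injective h)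

lemma card_submodule_strict [Finite V] {P Q : Submodule (ZMod p) V} (h : P < Q) :
    Nat.card P < Nat.card Q := by
  have e1 : Nat.card P = (P : Set V).ncard := Nat.card_coe_set_eq _
  have e2 : Nat.card Q = (Q : Set V).ncard := Nat.card_coe_set_eq _
  rw [e1, e2]
  exact Set.ncard_lt_ncard (SetLike.coe_ssubset_coe.mpr h) (Set.toFinite _)

lemma card_submodule_lt_top [Finite V] {P : Submodule (ZMod p) V} (h : P ≠ ⊤) :
    Nat.card P < Nat.card V := by
  have := card_submodule_strict (p := p) (lt_top_iff_ne_top.mpr h)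
  rwa [Nat.card_congr (Submodule.topEquiv (R := ZMod p) (M := V)).toEquiv] at this

lemma card_subgroup_strict [Finite G] {P Q : Subgroup G} (h : P < Q) :
    Nat.card P < Nat.card Q := by
  have e1 : Nat.card P = (P : Set G).ncard := Nat.card_coe_set_eq _
  have e2 : Nat.card Q = (Q : Set G).ncard := Nat.card_coe_set_eq _
  rw [e1, e2]
  exact Set.ncard_lt_ncard (SetLike.coe_ssubset_coe.mpr h) (Set.toFinite _)



variable {α : Type*} {M : Type*}

lemma list_prod_eq_pow_count [Monoid M] [DecidableEq α] (F : α → M) (b : α)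
    (hcomm : ∀ x y : α, Commute (F x) (F y)) :
    ∀ l : List α,
      (l.map F).prod = F b ^ (l.count b) * ((l.filter (fun x => x ≠ b)).map F).prod := by
  intro l
  induction l with
  | nil => simp
  | cons a t ih =>
    by_cases hab : a = b
    · subst hab
      have hcount : (a :: t).count a = t.count a + 1 := by
        simp [List.count_cons]
      have hfilt : (a :: t).filter (fun x => x ≠ a) = t.filter (fun x => x ≠ a) := by
        simp [List.filter_cons]
      rw [List.map_cons, List.prod_cons, ih, hcount, hfilt, pow_succ']
      rw [mul_assoc]
    · have hcount : (a :: t).count b = t.count b := by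
        simp [List.count_cons, hab]
      have hfilt : (a :: t).filter (fun x => x ≠ b) = a :: t.filter (fun x => x ≠ b) := by
        simp [List.filter_cons, hab]
      rw [List.map_cons, List.prod_cons, ih, hcount, hfilt, List.map_cons, List.prod_cons]
      rw [← mul_assoc, ((hcomm a b).pow_right _).eq, mul_assoc]

lemma list_prod_eq_zero [MonoidWithZero M] [DecidableEq α] [Fintype α] [Nonempty α]
    {prime : ℕ} (hprime : 0 < prime)
    (F : α → M) (hcomm : ∀ x y : α, Commute (F x) (F y))
    (hp : ∀ b : α, F b ^ prime = 0)
    {l : List α} (hlen : prime * Fintype.card α ≤ l.length) :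
    (l.map F).prod = 0 := by
  -- pigeonhole: some b occurs at least prime times
  have hex : ∃ b : α, prime ≤ l.count b := by
    by_contra hc
    push_neg at hc
    have hsum : ∑ a ∈ (l : Multiset α).toFinset, (l : Multiset α).count a = l.length := by
      rw [Multiset.toFinset_sum_count_eq]; rfl
    have hle : (l.length : ℕ) ≤ (prime - 1) * Fintype.card α := by
      rw [← hsum]
      calc ∑ a ∈ (l : Multiset α).toFinset, (l : Multiset α).count a
          ≤ ∑ _a ∈ (l : Multiset α).toFinset, (prime - 1) := by
            refine Finset.sum_le_sum fun a _ => ?_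
            rw [Multiset.coe_count]
            have := hc a
            omega
        _ = (l : Multiset α).toFinset.card * (prime - 1) := by
            rw [Finset.sum_const, smul_eq_mul]
        _ ≤ Fintype.card α * (prime - 1) := by
            exact Nat.mul_le_mul_right _ (Finset.card_le_univ _)
        _ = (prime - 1) * Fintype.card α := Nat.mul_comm _ _
    have hcard : 0 < Fintype.card α := Fintype.card_pos
    have hlt : (prime - 1) * Fintype.card α < prime * Fintype.card α :=
      (Nat.mul_lt_mul_right hcard).mpr (by omega)
    omega
  obtain ⟨b, hb⟩ := hex
  rw [list_prod_eq_pow_count F b hcomm l]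
  have : F b ^ l.count b = 0 := by
    have : F b ^ l.count b = F b ^ prime * F b ^ (l.count b - prime) := by
      rw [← pow_add]
      congr 1
      omega
    rw [this, hp, zero_mul]
  rw [this, zero_mul]


section Key

variable {p : ℕ} [Fact p.Prime] {G V : Type} [Group G]
  [AddCommGroup V] [Module (ZMod p) V]

lemma key (ρ : Representation (ZMod p) G V) [Finite G] [Finite V] [Nontrivial V]
    (hab : ∀ a b : G, a * b = b * a) (hel : ∀ g : G, g ^ p = 1)
    (hnq : ∀ g : G, g ≠ 1 → (ρ g - 1) ^ 2 ≠ 0)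
    (B : Subgroup G) (hB : B ≠ ⊥)
    (ha : Nat.card V ≤ Nat.card B * Nat.card (fixedSubmodule ρ B))
    (hb : ∀ C : Subgroup G, C ≠ ⊥ → C < B →
      p * (Nat.card C * Nat.card (fixedSubmodule ρ C)) ≤
        Nat.card B * Nat.card (fixedSubmodule ρ B)) :
    False := by
  classical
  haveI : Fintype (↥B) := Fintype.ofFinite _
  set W : Submodule (ZMod p) V := fixedSubmodule ρ B with hWdef
  set fl : ↥B → Module.End (ZMod p) V := fun b => ell ρ (b : G) with hfl
  have hcomm : ∀ x y : ↥B, Commute (fl x) (fl y) := fun x y => commute_ell ρ hab _ _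
  have hp0 : 0 < p := (Fact.out : p.Prime).pos
  have h2p : 2 ≤ p := (Fact.out : p.Prime).two_le
  have hlp : ∀ b : ↥B, fl b ^ p = 0 := fun b => ell_pow_p ρ hel _
  have hflW : ∀ (b : ↥B) {w : V}, w ∈ W → fl b w = 0 := fun b {w} hw => ell_fixed ρ b.2 hw
  -- the submodule of quadratically-killed vectors
  set V₂ : Submodule (ZMod p) V := ⨅ b : ↥B, W.comap (fl b) with hV2def
  have hmemV₂ : ∀ {x : V}, x ∈ V₂ ↔ ∀ b : ↥B, fl b x ∈ W := by
    intro x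
    simp [hV2def, Submodule.mem_iInf, Submodule.mem_comap]
  obtain ⟨bB, hbBmem, hbBne⟩ : ∃ g ∈ B, g ≠ 1 := by
    by_contra hc; push_neg at hc
    exact hB ((Subgroup.eq_bot_iff_forall B).mpr hc)
  by_cases hV₂top : V₂ = ⊤
  · refine hnq bB hbBne ?_
    apply LinearMap.ext
    intro x
    have hx : fl ⟨bB, hbBmem⟩ x ∈ W := hmemV₂.mp (hV₂top ▸ Submodule.mem_top) _
    rw [pow_two, Module.End.mul_apply, LinearMap.zero_apply]
    exact hflW ⟨bB, hbBmem⟩ hx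
  -- pick x₀ outside V₂
  obtain ⟨x₀, hx₀⟩ : ∃ x₀ : V, x₀ ∉ V₂ := by
    by_contra hc; push_neg at hc
    exact hV₂top (Submodule.eq_top_iff'.mpr hc)
  set M₀ : ℕ := p * Fintype.card (↥B) with hM₀
  have TN : ∀ l : List (↥B), M₀ ≤ l.length → (l.map fl).prod = 0 := fun l hl =>
    list_prod_eq_zero hp0 fl hcomm hlp hl
  -- choose v outside V₂ with all fl b v ∈ V₂
  set P : ℕ → Prop := fun k => ∃ (l : List (↥B)) (x : V),
    l.length = k ∧ (l.map fl).prod x ∉ V₂ with hPdef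
  have hP0 : P 0 := ⟨[], x₀, rfl, by simpa using hx₀⟩
  have hPM : ∀ k, M₀ ≤ k → ¬ P k := by
    rintro k hk ⟨l, x, hlen, hnmem⟩
    rw [TN l (le_of_le_of_eq hk hlen.symm)] at hnmem
    exact hnmem (by simpa using V₂.zero_mem)
  set k₀ := Nat.findGreatest P M₀ with hk₀def
  have hPk₀ : P k₀ := Nat.findGreatest_spec (Nat.zero_le _) hP0
  have hk₀lt : k₀ < M₀ :=
    lt_of_le_of_ne (Nat.findGreatest_le _) (fun h => hPM _ (le_of_eq h.symm) hPk₀)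
  obtain ⟨l₀, x₁, hlen₀, hv0⟩ := hPk₀
  set v : V := (l₀.map fl).prod x₁ with hvdef
  have hv1 : ∀ b : ↥B, fl b v ∈ V₂ := by
    intro b
    by_contra hc
    have hnew : P (k₀ + 1) := ⟨b :: l₀, x₁, by simp [hlen₀], by
      rw [List.map_cons, List.prod_cons, Module.End.mul_apply]
      exact hc⟩
    exact Nat.findGreatest_is_greatest (Nat.lt_succ_self k₀) (by omega) hnew
  have hv1' : ∀ b b' : ↥B, fl b (fl b' v) ∈ W := fun b b' => hmemV₂.mp (hv1 b') b
  obtain ⟨b₀, hb₀⟩ : ∃ b : ↥B, fl b v ∉ W := by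
    by_contra hc; push_neg at hc
    exact hv0 (hmemV₂.mpr hc)
  -- the homomorphism μ : B → V/W
  have hexp : ∀ b b' : ↥B, fl (b * b') v = fl b v + fl b' v + fl b (fl b' v) := by
    intro b b'
    have h1 : fl (b * b') = ell ρ ((b : G) * (b' : G)) := by
      rw [hfl]; norm_cast
    rw [h1, ell_mul ρ]
    simp [LinearMap.add_apply, Module.End.mul_apply, hfl]
  let μ : ↥B →* Multiplicative (V ⧸ W) :=
    { toFun := fun b => Multiplicative.ofAdd (Submodule.Quotient.mk (fl b v))
      map_one' := by
        have h1 : fl (1 : ↥B) = 0 := by rw [hfl]; simpa using ell_one ρ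
        simp [h1]
      map_mul' := fun b b' => by
        have h3 : Submodule.Quotient.mk (p := W) (fl b (fl b' v)) = 0 :=
          (Submodule.Quotient.mk_eq_zero W).mpr (hv1' b b')
        have : Submodule.Quotient.mk (p := W) (fl (b * b') v)
            = Submodule.Quotient.mk (fl b v) + Submodule.Quotient.mk (fl b' v) := by
          rw [hexp b b', Submodule.Quotient.mk_add, h3, add_zero,
            Submodule.Quotient.mk_add]
        simp only [this]
        rfl }
  have hμapp : ∀ b : ↥B, μ b = Multiplicative.ofAdd (Submodule.Quotient.mk (fl b v)) :=
    fun b => rfl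
  set S : Subgroup (↥B) := μ.ker with hSdef
  have hSmem : ∀ b : ↥B, b ∈ S ↔ fl b v ∈ W := by
    intro b
    rw [hSdef, MonoidHom.mem_ker, hμapp b, ← ofAdd_zero,
      Multiplicative.ofAdd.apply_eq_iff_eq]
    exact Submodule.Quotient.mk_eq_zero W
  set N1 : Submodule (ZMod p) V := ⨆ b : ↥B, LinearMap.range (fl b) with hN1def
  -- properness of W ⊔ N1
  have hproper : W ⊔ N1 ≠ ⊤ := by
    intro htop
    set Nser : ℕ → Submodule (ZMod p) V := fun k =>
      ⨆ (l : List (↥B)) (_ : l.length = k), LinearMap.range ((l.map fl).prod) with hNserdef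
    have hN1le : N1 ≤ Nser 1 := by
      refine iSup_le fun b => ?_
      have h1 : LinearMap.range (fl b) = LinearMap.range ((([b]).map fl).prod) := by
        rw [List.map_cons, List.map_nil, List.prod_cons, List.prod_nil, mul_one]
      rw [h1]
      show LinearMap.range ((([b]).map fl).prod)
          ≤ ⨆ (l : List (↥B)) (_ : l.length = 1), LinearMap.range ((l.map fl).prod)
      exact le_iSup_of_le ([b] : List (↥B)) (le_iSup_of_le rfl le_rfl)
    have hmaple : ∀ (b : ↥B) (k : ℕ),
        Submodule.map (fl b) (Nser k) ≤ Nser (k + 1) := by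
      intro b k
      show Submodule.map (fl b)
            (⨆ (l : List (↥B)) (_ : l.length = k), LinearMap.range ((l.map fl).prod))
          ≤ ⨆ (l : List (↥B)) (_ : l.length = k + 1), LinearMap.range ((l.map fl).prod)
      simp only [Submodule.map_iSup]
      refine iSup₂_le fun l hl => ?_
      have h2 : Submodule.map (fl b) (LinearMap.range ((l.map fl).prod))
          = LinearMap.range (((b :: l).map fl).prod) := by
        rw [List.map_cons, List.prod_cons, Module.End.mul_eq_comp, LinearMap.range_comp]
      refine le_trans (le_of_eq h2) (le_iSup_of_le (b :: l) (le_iSup_of_le ?_ le_rfl))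
      have hfin : (b :: l).length = l.length + 1 := rfl
      omega
    have hflWle : ∀ b : ↥B, Submodule.map (fl b) W ≤ W := by
      intro b
      rintro y ⟨w, hw, rfl⟩
      rw [hflW b hw]
      exact W.zero_mem
    have hIH : ∀ k, (⊤ : Submodule (ZMod p) V) ≤ W ⊔ Nser (k + 1) := by
      intro k
      induction k with
      | zero =>
        rw [← htop]
        exact sup_le_sup_left hN1le W
      | succ k ih =>
        have hN1le2 : N1 ≤ W ⊔ Nser (k + 2) := by
          refine iSup_le fun b => ?_
          have h3 : LinearMap.range (fl b) = Submodule.map (fl b) ⊤ :=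
            LinearMap.range_eq_map _
          rw [h3]
          calc Submodule.map (fl b) ⊤ ≤ Submodule.map (fl b) (W ⊔ Nser (k + 1)) :=
                Submodule.map_mono ih
          _ = Submodule.map (fl b) W ⊔ Submodule.map (fl b) (Nser (k + 1)) :=
                Submodule.map_sup _ _ _
          _ ≤ W ⊔ Nser (k + 2) := sup_le_sup (hflWle b) (hmaple b (k + 1))
        calc (⊤ : Submodule (ZMod p) V) = W ⊔ N1 := htop.symm
        _ ≤ W ⊔ (W ⊔ Nser (k + 2)) := sup_le_sup_left hN1le2 W
        _ = W ⊔ Nser (k + 2) := by rw [← sup_assoc, sup_idem]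
    have hNbot : Nser (M₀ + 1) = ⊥ := by
      show (⨆ (l : List (↥B)) (_ : l.length = M₀ + 1),
        LinearMap.range ((l.map fl).prod)) = ⊥
      refine le_antisymm (iSup₂_le fun l hl => ?_) bot_le
      rw [TN l (by omega)]
      simp
    have hWtop : (⊤ : Submodule (ZMod p) V) ≤ W := by
      have := hIH M₀
      rwa [hNbot, sup_bot_eq] at this
    exact hb₀ (hWtop Submodule.mem_top)
  -- the subgroup SG and fixed space D
  set SG : Subgroup G := S.map B.subtype with hSGdef
  set D : Submodule (ZMod p) V := fixedSubmodule ρ SG with hDdef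
  have hWD : W ≤ D := by
    intro w hw
    rintro g ⟨z, _, rfl⟩
    exact hw _ z.2
  set D' : Submodule (ZMod p) V := D ⊓ (W ⊔ N1) with hD'def
  have hWD' : W ≤ D' := le_inf hWD le_sup_left
  have hmemD' : ∀ b : ↥B, fl b v ∈ D' := by
    intro b
    refine Submodule.mem_inf.mpr ⟨?_, ?_⟩
    · rintro g ⟨z, hzS, rfl⟩
      have h1 : fl z (fl b v) = 0 := by
        have h2 : fl z (fl b v) = fl b (fl z v) := by
          have h2' := congrArg (fun (E : Module.End (ZMod p) V) => E v) ((hcomm z b).eq)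
          simpa [Module.End.mul_apply] using h2'
        rw [h2, hflW b ((hSmem z).mp hzS)]
      have h4 : B.subtype z = (z : G) := rfl
      rw [h4, rho_eq_add_ell]
      have h5 : ell ρ (z : G) (fl b v) = fl z (fl b v) := rfl
      rw [h5, h1, add_zero]
    · exact Submodule.mem_sup_right (Submodule.mem_iSup_of_mem b ⟨v, rfl⟩)
  -- counting
  haveI : Finite (V ⧸ W) := Quotient.finite _
  let φ : ↥D' →ₗ[ZMod p] V ⧸ W := W.mkQ.comp D'.subtype
  let φ' : ↥D' →+ V ⧸ W := φ.toAddMonoidHom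
  have c1 : Nat.card (↥B) = Nat.card (↥B ⧸ S) * Nat.card S :=
    Subgroup.card_eq_card_quotient_mul_card_subgroup S
  have c2 : Nat.card (↥B ⧸ S) = Nat.card μ.range :=
    Nat.card_congr (QuotientGroup.quotientKerEquivRange μ).toEquiv
  have c3 : Nat.card (↥D') = Nat.card (↥D' ⧸ φ'.ker) * Nat.card φ'.ker :=
    AddSubgroup.card_eq_card_quotient_mul_card_addSubgroup _
  have c4 : Nat.card (↥D' ⧸ φ'.ker) = Nat.card φ'.range :=
    Nat.card_congr (QuotientAddGroup.quotientKerEquivRange φ').toEquiv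
  have c5 : Nat.card φ'.ker = Nat.card W := by
    have eqv : ↥(φ'.ker) ≃ ↥W :=
      { toFun := fun x => ⟨((x : ↥D') : V), by
          have hx := x.2
          rw [AddMonoidHom.mem_ker] at hx
          exact (Submodule.Quotient.mk_eq_zero W).mp hx⟩
        invFun := fun w => ⟨⟨(w : V), hWD' w.2⟩, by
          rw [AddMonoidHom.mem_ker]
          exact (Submodule.Quotient.mk_eq_zero W).mpr w.2⟩
        left_inv := fun x => Subtype.ext (Subtype.ext rfl)
        right_inv := fun w => rfl }
    exact Nat.card_congr eqv
  have c6 : Nat.card μ.range ≤ Nat.card φ'.range := by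
    have hmem : ∀ x : μ.range, (x : Multiplicative (V ⧸ W)).toAdd ∈ φ'.range := by
      rintro ⟨x, b, rfl⟩
      exact ⟨⟨fl b v, hmemD' b⟩, rfl⟩
    refine Nat.card_le_card_of_injective
      (fun x => (⟨(x : Multiplicative (V ⧸ W)).toAdd, hmem x⟩ : ↥φ'.range)) ?_
    intro x y hxy
    have h2 : (x : Multiplicative (V ⧸ W)) = (y : Multiplicative (V ⧸ W)) := by
      have h3 := congrArg (fun z : ↥φ'.range => (z : V ⧸ W)) hxy
      exact h3
    exact Subtype.ext h2
  have hmain : Nat.card (↥B) * Nat.card W ≤ Nat.card S * Nat.card (↥D') := by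
    calc Nat.card (↥B) * Nat.card W
        = (Nat.card (↥B ⧸ S) * Nat.card S) * Nat.card W := by rw [c1]
      _ = Nat.card S * (Nat.card (↥B ⧸ S) * Nat.card W) := by ring
      _ = Nat.card S * (Nat.card μ.range * Nat.card W) := by rw [c2]
      _ ≤ Nat.card S * (Nat.card φ'.range * Nat.card W) := by
          exact Nat.mul_le_mul_left _ (Nat.mul_le_mul_right _ c6)
      _ = Nat.card S * (Nat.card (↥D' ⧸ φ'.ker) * Nat.card φ'.ker) := by rw [c4, c5]
      _ = Nat.card S * Nat.card (↥D') := by rw [← c3]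
  by_cases hS : S = ⊥
  · -- then B·W fits into the proper subspace W ⊔ N1
    have hcS : Nat.card S = 1 := by rw [hS]; exact Subgroup.card_bot
    rw [hcS, one_mul] at hmain
    have hle2 : Nat.card (↥D') ≤ Nat.card (W ⊔ N1 : Submodule (ZMod p) V) :=
      card_submodule_mono inf_le_right
    have hlt : Nat.card (W ⊔ N1 : Submodule (ZMod p) V) < Nat.card V :=
      card_submodule_lt_top hproper
    omega
  · -- S is a proper nontrivial subgroup; contradiction with hb
    obtain ⟨z, hzS, hz1⟩ : ∃ z ∈ S, z ≠ 1 := by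
      by_contra hc; push_neg at hc
      exact hS ((Subgroup.eq_bot_iff_forall S).mpr hc)
    have hSGne : SG ≠ ⊥ := by
      intro h
      have hz : (z : G) ∈ SG := ⟨z, hzS, rfl⟩
      rw [h, Subgroup.mem_bot] at hz
      exact hz1 (by exact_mod_cast OneMemClass.coe_eq_one.mp hz)
    have hSGlt : SG < B := by
      refine lt_of_le_of_ne (Subgroup.map_subtype_le S) ?_
      intro h
      have hmem : (b₀ : G) ∈ SG := h.symm ▸ b₀.2
      obtain ⟨z', hz'S, hz'e⟩ := hmem
      have : z' = b₀ := Subtype.ext hz'e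
      rw [this] at hz'S
      exact hb₀ ((hSmem b₀).mp hz'S)
    have hcSG : Nat.card SG = Nat.card S :=
      (Nat.card_congr (Subgroup.equivMapOfInjective S B.subtype
        (Subgroup.subtype_injective B)).toEquiv).symm
    have hhb := hb SG hSGne hSGlt
    rw [hcSG, ← hDdef] at hhb
    have hle3 : Nat.card (↥D') ≤ Nat.card D := card_submodule_mono inf_le_left
    have hSDpos : 0 < Nat.card S * Nat.card D :=
      Nat.mul_pos Nat.card_pos Nat.card_pos
    have hchain : p * (Nat.card S * Nat.card D) ≤ Nat.card S * Nat.card D := by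
      calc p * (Nat.card S * Nat.card D) ≤ Nat.card (↥B) * Nat.card W := hhb
        _ ≤ Nat.card S * Nat.card (↥D') := hmain
        _ ≤ Nat.card S * Nat.card D := Nat.mul_le_mul_left _ hle3
    nlinarith
end Key

end Stmt8Aux

theorem stmt8 {p : ℕ} [Fact p.Prime] {G V : Type} [Group G] [Finite G] [Nontrivial G]
    (hab : ∀ a b : G, a * b = b * a) (hel : ∀ g : G, g ^ p = 1)
    [AddCommGroup V] [Module (ZMod p) V] [FiniteDimensional (ZMod p) V]
    (ρ : Representation (ZMod p) G V) (hfaith : Function.Injective ρ)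
    (hnq : ∀ g : G, g ≠ 1 → (ρ g - 1) ^ 2 ≠ 0)
    (H : Subgroup G) (hH : H ≠ ⊥)
    (W : Submodule (ZMod p) V) (hW : W ≤ fixedSubmodule ρ H) :
    Nat.card H * Nat.card W < Nat.card V := by
  classical
  haveI : Finite V := Module.finite_of_finite (ZMod p)
  haveI : Nontrivial V := by
    by_contra hns
    rw [not_nontrivial_iff_subsingleton] at hns
    obtain ⟨g, hg⟩ := exists_ne (1 : G)
    exact hg (hfaith (Subsingleton.elim _ _))
  have h1p : 1 < p := (Fact.out : p.Prime).one_lt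
  have hWle : Nat.card W ≤ Nat.card (fixedSubmodule ρ H) := Stmt8Aux.card_submodule_mono hW
  have hmain : Nat.card H * Nat.card (fixedSubmodule ρ H) < Nat.card V := by
    by_contra hc
    push_neg at hc
    set gfun : Subgroup G → ℕ :=
      fun C => Nat.card C * Nat.card (fixedSubmodule ρ C) with hgfun
    set K : ℕ := Nat.card G + 1 with hK
    have hcard_le : ∀ C : Subgroup G, Nat.card C ≤ Nat.card G := fun C =>
      Nat.card_le_card_of_injective _ (Subgroup.subtype_injective C)
    have hcard_pos : ∀ C : Subgroup G, 0 < Nat.card C := fun C => Nat.card_pos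
    haveI hTne : Nonempty {C : Subgroup G // C ≠ ⊥} := ⟨⟨H, hH⟩⟩
    obtain ⟨B₀, hB₀max⟩ := Finite.exists_max
      (fun C : {C : Subgroup G // C ≠ ⊥} => gfun C.1 * K + (K - Nat.card C.1))
    set B : Subgroup G := B₀.1 with hBdef
    have hteq : ∀ C D : {C : Subgroup G // C ≠ ⊥}, gfun C.1 < gfun D.1 →
        gfun C.1 * K + (K - Nat.card C.1) < gfun D.1 * K + (K - Nat.card D.1) := by
      intro C D h
      have h2 : K - Nat.card C.1 < K := Nat.sub_lt (by omega) (hcard_pos C.1)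
      have h3 : (gfun C.1 + 1) * K ≤ gfun D.1 * K := Nat.mul_le_mul_right _ (by omega)
      have h4 : (gfun C.1 + 1) * K = gfun C.1 * K + K := by ring
      omega
    have hmono : ∀ C : {C : Subgroup G // C ≠ ⊥}, gfun C.1 ≤ gfun B := by
      intro C
      by_contra hgt
      push_neg at hgt
      exact absurd (hB₀max C) (not_le.mpr (hteq B₀ C hgt))
    have hstrict : ∀ C : {C : Subgroup G // C ≠ ⊥}, C.1 < B → gfun C.1 < gfun B := by
      intro C hlt
      rcases lt_or_eq_of_le (hmono C) with h | h
      · exact h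
      · exfalso
        have hcc : Nat.card C.1 < Nat.card B := Stmt8Aux.card_subgroup_strict hlt
        have h5 : K - Nat.card B < K - Nat.card C.1 := by
          have h6 := hcard_le B
          have h7 := hcard_le C.1
          have h8 := hcard_pos C.1
          omega
        have h9 : gfun B * K + (K - Nat.card B) < gfun C.1 * K + (K - Nat.card C.1) := by
          rw [h]
          omega
        exact absurd (hB₀max C) (not_le.mpr h9)
    have ha : Nat.card V ≤ Nat.card B * Nat.card (fixedSubmodule ρ B) :=
      le_trans hc (hmono ⟨H, hH⟩)
    have hb : ∀ C : Subgroup G, C ≠ ⊥ → C < B →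
        p * (Nat.card C * Nat.card (fixedSubmodule ρ C)) ≤
          Nat.card B * Nat.card (fixedSubmodule ρ B) := by
      intro C hne hlt
      have hlt2 : gfun C < gfun B := hstrict ⟨C, hne⟩ hlt
      obtain ⟨a1, ha1⟩ := Stmt8Aux.card_subgroup_pow hel C
      obtain ⟨a2, ha2⟩ := Stmt8Aux.card_submodule_pow (fixedSubmodule ρ C)
      obtain ⟨a3, ha3⟩ := Stmt8Aux.card_subgroup_pow hel B
      obtain ⟨a4, ha4⟩ := Stmt8Aux.card_submodule_pow (fixedSubmodule ρ B)
      have e1 : gfun C = p ^ (a1 + a2) := by rw [hgfun]; simp only []; rw [ha1, ha2, pow_add]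
      have e2 : gfun B = p ^ (a3 + a4) := by rw [hgfun]; simp only []; rw [ha3, ha4, pow_add]
      rw [e1, e2] at hlt2
      have hexp : a1 + a2 < a3 + a4 := (Nat.pow_lt_pow_iff_right h1p).mp hlt2
      have : p * (Nat.card C * Nat.card (fixedSubmodule ρ C)) = p ^ (a1 + a2 + 1) := by
        rw [ha1, ha2, pow_succ, pow_add]; ring
      rw [this]
      have : Nat.card B * Nat.card (fixedSubmodule ρ B) = p ^ (a3 + a4) := by
        rw [ha3, ha4, pow_add]
      rw [this]
      exact Nat.pow_le_pow_right (le_of_lt h1p) (by omega)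
    exact Stmt8Aux.key ρ hab hel hnq B B₀.2 ha hb
  calc Nat.card H * Nat.card W
      ≤ Nat.card H * Nat.card (fixedSubmodule ρ H) := Nat.mul_le_mul_left _ hWle
    _ < Nat.card V := hmain
end

section
/- Let p be an odd prime, G a finite p-group, V a finite-dimensional F_p[G]-module on which every central element of order p acts with minimal polynomial (X−1)^p, and let S = V ⋊ G be the semidirect product. Then V is a maximal normal abelian subgroup of S. -/
open Module Polynomial

/-- The action homomorphism `G →* MulAut (Multiplicative V)` obtained from a linear
action of `G` on `V`, used to form the semidirect product `V ⋊ G`. -/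
def toMulAut {p : ℕ} {G V : Type} [Group G] [AddCommGroup V] [Module (ZMod p) V]
    (ρ : G →* (V ≃ₗ[ZMod p] V)) : G →* MulAut (Multiplicative V) where
  toFun g := AddEquiv.toMultiplicative (ρ g).toAddEquiv
  map_one' := by ext v; simp only [map_one]; rfl
  map_mul' g h := by ext v; simp only [map_mul]; rfl

/-- A nontrivial normal subgroup of a finite `p`-group meets the center nontrivially. -/
lemma aux_center {p : ℕ} [Fact p.Prime] {G : Type} [Group G] [Finite G] (hG : IsPGroup p G)
    {H : Subgroup G} [H.Normal] (hH : H ≠ ⊥) :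
    ∃ z : G, z ∈ H ∧ z ∈ Subgroup.center G ∧ z ≠ 1 := by
  classical
  have hG' : IsPGroup p (ConjAct G) := hG.of_equiv ConjAct.toConjAct
  have hdvd : p ∣ Nat.card H := by
    obtain ⟨n, hn⟩ := (IsPGroup.iff_card).mp (hG.to_subgroup H)
    rcases Nat.eq_zero_or_pos n with h0 | h0
    · exfalso
      apply hH
      rw [Subgroup.eq_bot_iff_card, hn, h0, pow_zero]
    · exact hn ▸ dvd_pow_self p h0.ne'
  have h1 : (1 : H) ∈ MulAction.fixedPoints (ConjAct G) H := by
    intro g; exact smul_one g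
  obtain ⟨b, hb, hb1⟩ := hG'.exists_fixed_point_of_prime_dvd_card_of_fixed_point (α := H) hdvd h1
  refine ⟨(b : G), b.2, ?_, ?_⟩
  · rw [Subgroup.mem_center_iff]
    intro g
    have := hb (ConjAct.toConjAct g)
    have hval : ((ConjAct.toConjAct g • b : H) : G) = g * b * g⁻¹ := by
      rw [ConjAct.Subgroup.val_conj_smul]; rfl
    rw [this] at hval
    have h2 : g * (b : G) * g⁻¹ = (b : G) := hval.symm
    exact (mul_inv_eq_iff_eq_mul).mp h2
  · intro h
    apply hb1
    exact (Subtype.ext h).symm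

theorem stmt11 {p : ℕ} [Fact p.Prime] {G V : Type} [Group G] [Finite G]
    (hG : IsPGroup p G)
    [AddCommGroup V] [Module (ZMod p) V] [FiniteDimensional (ZMod p) V]
    (ρ : G →* (V ≃ₗ[ZMod p] V))
    (hPS : ∀ z ∈ Subgroup.center G, z ≠ 1 → z ^ p = 1 →
      minpoly (ZMod p) (ρ z).toLinearMap = (X - 1) ^ p) :
    let S := Multiplicative V ⋊[toMulAut ρ] G
    let VS : Subgroup S := SemidirectProduct.inl.range
    VS.Normal ∧ (∀ a ∈ VS, ∀ b ∈ VS, a * b = b * a) ∧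
      ∀ A : Subgroup S, A.Normal → (∀ a ∈ A, ∀ b ∈ A, a * b = b * a) →
        VS ≤ A → A = VS := by
  intro S VS
  have hker : VS = (SemidirectProduct.rightHom :
      (Multiplicative V ⋊[toMulAut ρ] G) →* G).ker :=
    SemidirectProduct.range_inl_eq_ker_rightHom
  refine ⟨hker ▸ MonoidHom.normal_ker _, ?_, ?_⟩
  · rintro a ⟨v, rfl⟩ b ⟨w, rfl⟩
    rw [← map_mul, ← map_mul, mul_comm]
  · intro A hAn hAab hVA
    refine le_antisymm ?_ hVA
    intro a haA
    rw [hker, MonoidHom.mem_ker]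
    by_contra hg
    -- the projection of A to G is a nontrivial normal subgroup of G
    set H : Subgroup G := A.map SemidirectProduct.rightHom with hH
    have hHn : H.Normal := hAn.map _ SemidirectProduct.rightHom_surjective
    have hHbot : H ≠ ⊥ := by
      intro hbot
      apply hg
      have : SemidirectProduct.rightHom a ∈ H := Subgroup.mem_map_of_mem _ haA
      rwa [hbot, Subgroup.mem_bot] at this
    obtain ⟨z, hzH, hzC, hz1⟩ := aux_center hG hHbot
    -- find an element of order p
    obtain ⟨n, hn⟩ := (IsPGroup.iff_orderOf).mp hG z
    have hn0 : n ≠ 0 := by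
      rintro rfl
      exact hz1 (orderOf_eq_one_iff.mp (by simpa using hn))
    set z' : G := z ^ p ^ (n - 1) with hz'
    have hz'1 : z' ≠ 1 := by
      intro h
      have := orderOf_dvd_of_pow_eq_one h
      rw [hn] at this
      have hlt : p ^ (n - 1) < p ^ n :=
        Nat.pow_lt_pow_right (Fact.out (p := p.Prime)).one_lt (Nat.sub_lt (Nat.pos_of_ne_zero hn0) one_pos)
      have hpos : 0 < p ^ (n - 1) := pow_pos (Fact.out (p := p.Prime)).pos _
      exact absurd (Nat.le_of_dvd hpos this) (not_le.mpr hlt)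
    have hz'p : z' ^ p = 1 := by
      rw [hz', ← pow_mul, ← pow_succ, Nat.sub_add_cancel (Nat.one_le_iff_ne_zero.mpr hn0), ← hn,
        pow_orderOf_eq_one]
    have hz'C : z' ∈ Subgroup.center G := Subgroup.pow_mem _ hzC _
    have hz'H : z' ∈ H := Subgroup.pow_mem _ hzH _
    -- z' acts trivially on V
    obtain ⟨c, hcA, hcz⟩ := hz'H
    have hact : ∀ u : Multiplicative V, toMulAut ρ z' u = u := by
      intro u
      have hu : SemidirectProduct.inl u ∈ A := hVA ⟨u, rfl⟩
      have h := hAab c hcA _ hu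
      have hcz' : c.right = z' := hcz
      have hleft : c.left * (toMulAut ρ) z' u = u * c.left := by
        have h' := congrArg SemidirectProduct.left h
        rw [SemidirectProduct.mul_left, SemidirectProduct.mul_left,
          SemidirectProduct.left_inl, SemidirectProduct.right_inl, hcz'] at h'
        simpa using h'
      rw [mul_comm u c.left] at hleft
      exact mul_left_cancel hleft
    have hid : (ρ z').toLinearMap = LinearMap.id := by
      ext v
      exact hact (Multiplicative.ofAdd v)
    have hmin := hPS z' hz'C hz'1 hz'p
    rw [hid] at hmin
    have haev : (Polynomial.aeval (LinearMap.id : V →ₗ[ZMod p] V)) (X - 1 : (ZMod p)[X]) = 0 := by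
      rw [map_sub, aeval_X, map_one, Module.End.one_eq_id, sub_self]
    have hmono : (X - 1 : (ZMod p)[X]).Monic := by
      simpa using monic_X_sub_C (1 : ZMod p)
    have hle := minpoly.min (ZMod p) (LinearMap.id : V →ₗ[ZMod p] V) hmono haev
    rw [hmin] at hle
    have hdeg : ((X - 1 : (ZMod p)[X]) ^ p).degree = p := by
      rw [degree_pow]
      have : (X - 1 : (ZMod p)[X]).degree = 1 := by
        simpa using degree_X_sub_C (1 : ZMod p)
      rw [this]
      simp
    have hdeg1 : (X - 1 : (ZMod p)[X]).degree = 1 := by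
      simpa using degree_X_sub_C (1 : ZMod p)
    rw [hdeg, hdeg1] at hle
    exact absurd (Nat.cast_le.mp hle) (not_le.mpr (Fact.out (p := p.Prime)).one_lt)
end
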